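/- Assume m ≥ n+1, ℓ differentiable, and ‖x_i‖₂ ≤ 1 for all i. There exists a set C ⊂ ℝ^m of Lebesgue measure zero (depending on the dataset) such that for every coefficient vector λ = (λ_1,…,λ_m) with positive entries and λ ∉ C, at every local minimum θ* of the regularized empirical loss L_n(·;λ), the network has an inactive neuron: there exists j ∈ [m] with a_j* = 0 and w_j* = 0. -/

import Mathlib

open scoped BigOperators
open MeasureTheory

noncomputable section

/-- Vectors in `ℝ^d` with the Euclidean norm. -/
abbrev Vec (d : ℕ) := EuclideanSpace ℝ (Fin d)

/-- Hadamard (entrywise) product. -/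
def nnHad {d : ℕ} (x φ : Vec d) : Vec d := WithLp.toLp 2 (fun i => x i * φ i)

/-- ReLU. -/
def nnRelu (z : ℝ) : ℝ := max z 0

/-- Euclidean dot product. -/
def nnDot {d : ℕ} (u v : Vec d) : ℝ := ∑ i, u i * v i

/-- Output of the two-layer ReLU network with masks `φ`. -/
def nnOut {d m : ℕ} (φ : ℕ → Vec d) (a : Fin m → ℝ) (w : Fin m → Vec d) (x : Vec d) : ℝ :=
  ∑ j, a j * nnRelu (nnDot (w j) (nnHad x (φ (j : ℕ))))

/-- The regularized empirical loss `L_n(θ; λ)`. -/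
def nnLoss {d m n : ℕ} (ℓ : ℝ → ℝ) (φ : ℕ → Vec d) (X : Fin n → Vec d) (Y : Fin n → ℝ)
    (lam : Fin m → ℝ) (θ : (Fin m → ℝ) × (Fin m → Vec d)) : ℝ :=
  (∑ i, ℓ (-(Y i) * nnOut φ θ.1 θ.2 (X i)))
    + (1 / 2) * ∑ j, lam j * ((θ.1 j) ^ 2 + ‖θ.2 j‖ ^ 2)

/-- The training (misclassification) error `R_n(θ; f)`. -/
def nnErr {d m n : ℕ} (φ : ℕ → Vec d) (X : Fin n → Vec d) (Y : Fin n → ℝ)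
    (θ : (Fin m → ℝ) × (Fin m → Vec d)) : ℝ :=
  (1 / (n : ℝ)) * ∑ i, if Y i = Real.sign (nnOut φ θ.1 θ.2 (X i)) then (0 : ℝ) else 1

/-- The masks are binary vectors. -/
def BinaryMasks {d : ℕ} (φ : ℕ → Vec d) : Prop := ∀ k i, φ k i = 0 ∨ φ k i = 1

/-- The mask sequence is periodic with period `p`. -/
def PeriodicMasks {d : ℕ} (φ : ℕ → Vec d) (p : ℕ) : Prop := ∀ k, φ (k + p) = φ k

/-- Assumption 1 on the loss: convex, non-decreasing, twice differentiable, `ℓ` and `ℓ'`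
are `1`-Lipschitz, and `ℓ'(z) ≤ exp (a z)` for a positive constant `a`. -/
def LossAssumption (ℓ ℓ' : ℝ → ℝ) (a : ℝ) : Prop :=
  ConvexOn ℝ Set.univ ℓ ∧ Monotone ℓ ∧ (∀ z, HasDerivAt ℓ (ℓ' z) z) ∧
  (∀ z, DifferentiableAt ℝ ℓ' z) ∧ LipschitzWith 1 ℓ ∧ LipschitzWith 1 ℓ' ∧
  0 < a ∧ ∀ z, ℓ' z ≤ Real.exp (a * z)

/-- Assumption 2 on the dataset: all data in the unit ball, and all but `E` points are
separated with margin `γ` by some network in the class `H_φ`. -/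
def DatasetAssumption {d n : ℕ} (φ : ℕ → Vec d) (X : Fin n → Vec d) (Y : Fin n → ℝ)
    (E γ : ℝ) : Prop :=
  (∀ i, ‖X i‖ ≤ 1) ∧
  ∃ (M : ℕ) (c : Fin M → ℝ) (v : Fin M → Vec d),
    1 ≤ M ∧ (∑ j, |c j|) = 1 ∧ (∀ j, ‖v j‖ = 1) ∧
    (n : ℝ) - E ≤
      ∑ i, (if γ ≤ Y i * ∑ j, c j * nnRelu (nnDot (v j) (nnHad (X i) (φ (j : ℕ)))) then (1 : ℝ)
        else 0)

/-! At a local minimum `(a, w)`, write `g i = y_i ℓ'(-y_i f(x_i))` for the dual weights and, for a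
neuron `j`, `v_j = ∑ g_i (x_i ⊙ φ_j)` over its active points (`w_j ⬝ (x_i ⊙ φ_j) > 0`). Perturbing
`a_j`, and perturbing `w_j` in directions orthogonal to the kink points (`w_j ⬝ (x_i ⊙ φ_j) = 0`),
along which every ReLU stays affine, gives the first-order conditions `λ_j a_j = ⟪v_j, w_j⟫` and
`λ_j w_j = a_j P_j v_j`, where `P_j` projects onto the orthogonal complement of the kink points.
Hence either `a_j = w_j = 0` or `λ_j = ‖P_j v_j‖`. For each of the finitely many activation
patterns, `g ↦ (‖P_j v_j‖)_j` is a Lipschitz map `ℝⁿ → ℝᵐ`, whose range is null because `n < m`;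
`C` is the union of these ranges. -/

open Set Filter Topology
open scoped RealInnerProductSpace

theorem volume_range_eq_zero_of_lipschitzWith {ι κ : Type*} [Fintype ι] [Fintype κ]
    {K : NNReal} {f : (ι → ℝ) → κ → ℝ} (hf : LipschitzWith K f)
    (hcard : Fintype.card ι < Fintype.card κ) : volume (range f) = 0 := by
  have hdim : dimH (range f) < (Fintype.card κ : NNReal) :=
    calc dimH (range f) ≤ dimH (univ : Set (ι → ℝ)) := hf.dimH_range_le
      _ = Fintype.card ι := Real.dimH_univ_pi ι
      _ < (Fintype.card κ : NNReal) := by exact_mod_cast hcard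
  have := hausdorffMeasure_of_dimH_lt hdim
  rwa [NNReal.coe_natCast, hausdorffMeasure_pi_real] at this

theorem volume_range_norm_continuousLinearMap_eq_zero {ι κ E : Type*} [Fintype ι] [Fintype κ]
    [NormedAddCommGroup E] [NormedSpace ℝ E] (L : κ → (ι → ℝ) →L[ℝ] E)
    (hcard : Fintype.card ι < Fintype.card κ) : volume (range fun g k => ‖L k g‖) = 0 := by
  refine volume_range_eq_zero_of_lipschitzWith (K := Finset.univ.sup fun k => ‖L k‖₊)
    (fun g g' => edist_pi_le_iff.2 fun k => ?_) hcard
  have hk : LipschitzWith ‖L k‖₊ (norm ∘ L k) := by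
    simpa using lipschitzWith_one_norm.comp (L k).lipschitz
  exact hk.weaken (Finset.le_sup (f := fun k => ‖L k‖₊) (Finset.mem_univ k)) g g'

section Projection

variable {E : Type*} [NormedAddCommGroup E] [InnerProductSpace ℝ E]
  {K : Submodule ℝ E} [K.HasOrthogonalProjection] {v w : E} {a c : ℝ}

theorem smul_eq_smul_starProjection_of_inner_eq (hw : w ∈ K)
    (h : ∀ u ∈ K, c * ⟪w, u⟫ = a * ⟪v, u⟫) : c • w = a • K.starProjection v := by
  have hperp : c • w - a • v ∈ Kᗮ := fun u hu => by
    rw [inner_sub_right, inner_smul_right, inner_smul_right, real_inner_comm w,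
      real_inner_comm v, h u hu, sub_self]
  have := K.starProjection_apply_eq_zero_iff.2 hperp
  rwa [map_sub, map_smul, map_smul, K.starProjection_eq_self_iff.2 hw, sub_eq_zero] at this

theorem eq_zero_or_eq_norm_starProjection (hw : w ∈ K) (hc : 0 < c)
    (hdir : ∀ u ∈ K, c * ⟪w, u⟫ = a * ⟪v, u⟫) (hscale : c * a = ⟪v, w⟫) :
    (a = 0 ∧ w = 0) ∨ c = ‖K.starProjection v‖ := by
  have hcw := smul_eq_smul_starProjection_of_inner_eq hw hdir
  rcases eq_or_ne a 0 with rfl | ha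
  · rw [zero_smul, smul_eq_zero] at hcw
    exact .inl ⟨rfl, hcw.resolve_left hc.ne'⟩
  right
  have hvP : ⟪v, K.starProjection v⟫ = ‖K.starProjection v‖ ^ 2 := by
    rw [← real_inner_self_eq_norm_sq, K.inner_starProjection_left_eq_right,
      K.starProjection_eq_self_iff.2 (K.starProjection_apply_mem v)]
  have hsq : c ^ 2 * a = ‖K.starProjection v‖ ^ 2 * a :=
    calc c ^ 2 * a = ⟪v, c • w⟫ := by rw [inner_smul_right, ← hscale]; ring
      _ = _ := by rw [hcw, inner_smul_right, hvP, mul_comm]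
  exact (pow_left_inj₀ hc.le (norm_nonneg _) two_ne_zero).1 (mul_right_cancel₀ ha hsq)

end Projection

section ProjectedActiveSum

variable {ι E : Type*} [NormedAddCommGroup E] [InnerProductSpace ℝ E] [CompleteSpace E]

def projectedActiveSum (x : ι → E) (P B : Finset ι) : (ι → ℝ) →L[ℝ] E :=
  (Submodule.span ℝ (x '' B))ᗮ.starProjection ∘L
    ∑ i ∈ P, (ContinuousLinearMap.proj i).smulRight (x i)

theorem projectedActiveSum_apply (x : ι → E) (P B : Finset ι) (g : ι → ℝ) :
    projectedActiveSum x P B g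
      = (Submodule.span ℝ (x '' B))ᗮ.starProjection (∑ i ∈ P, g i • x i) := by
  simp [projectedActiveSum]

end ProjectedActiveSum

theorem nnDot_eq_inner {d : ℕ} (u v : Vec d) : nnDot u v = ⟪u, v⟫ := by
  simp [nnDot, PiLp.inner_apply, mul_comm]

theorem nnRelu_eq_ite (s : ℝ) : nnRelu s = if 0 < s then s else 0 := by
  unfold nnRelu
  split_ifs with hs
  exacts [max_eq_left hs.le, max_eq_right (not_lt.1 hs)]

theorem eventually_nnRelu_add_mul {s r : ℝ} (hr : s = 0 → r = 0) :
    ∀ᶠ t in 𝓝 (0 : ℝ), nnRelu (s + t * r) = nnRelu s + t * (if 0 < s then r else 0) := by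
  have hlim : Tendsto (fun t : ℝ => s + t * r) (𝓝 0) (𝓝 s) :=
    (by fun_prop : Continuous fun t : ℝ => s + t * r).tendsto' 0 s (by simp)
  rcases lt_trichotomy s 0 with hs | rfl | hs
  · filter_upwards [hlim.eventually_lt_const hs] with t ht
    simp [nnRelu, ht.le, hs.le, hs.not_gt]
  · simp [hr rfl, nnRelu]
  · filter_upwards [hlim.eventually_const_lt hs] with t ht
    simp [nnRelu, ht.le, hs.le, hs]

section Network

variable {d m n : ℕ} {φ : ℕ → Vec d} {X : Fin n → Vec d} {Y : Fin n → ℝ} {ℓ ℓ' : ℝ → ℝ}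
  {lam : Fin m → ℝ}

theorem nnOut_add_single (φ : ℕ → Vec d) (a : Fin m → ℝ) (w : Fin m → Vec d) (j : Fin m)
    (c : ℝ) (u x : Vec d) :
    nnOut φ (a + Pi.single j c) (w + Pi.single j u) x = nnOut φ a w x +
      ((a j + c) * nnRelu (nnDot (w j + u) (nnHad x (φ j)))
        - a j * nnRelu (nnDot (w j) (nnHad x (φ j)))) := by
  rw [← sub_eq_iff_eq_add', nnOut, nnOut, ← Finset.sum_sub_distrib,
    Finset.sum_eq_single j (fun k _ hk => by simp [hk]) (by simp)]
  simp

theorem IsLocalMin.nnLoss_stationary_line (hderiv : ∀ z, HasDerivAt ℓ (ℓ' z) z)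
    {θ : (Fin m → ℝ) × (Fin m → Vec d)} (hmin : IsLocalMin (nnLoss ℓ φ X Y lam) θ)
    (δ : (Fin m → ℝ) × (Fin m → Vec d)) (D : Fin n → ℝ)
    (hD : ∀ᶠ t : ℝ in 𝓝 0, ∀ i, nnOut φ (θ + t • δ).1 (θ + t • δ).2 (X i)
      = nnOut φ θ.1 θ.2 (X i) + t * D i) :
    ∑ j, lam j * (θ.1 j * δ.1 j + ⟪θ.2 j, δ.2 j⟫)
      = ∑ i, Y i * ℓ' (-(Y i) * nnOut φ θ.1 θ.2 (X i)) * D i := by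
  set G : ℝ → ℝ := fun t => (∑ i, ℓ (-(Y i) * (nnOut φ θ.1 θ.2 (X i) + t * D i)))
    + (1 / 2) * ∑ j, lam j * ((θ.1 j + t * δ.1 j) ^ 2 + ‖θ.2 j + t • δ.2 j‖ ^ 2)
  have hline : IsLocalMin (fun t : ℝ => nnLoss ℓ φ X Y lam (θ + t • δ)) 0 :=
    IsLocalMin.comp_continuous (f := nnLoss ℓ φ X Y lam) (g := fun t : ℝ => θ + t • δ)
      (by simpa using hmin) (by fun_prop)
  have hG : (fun t : ℝ => nnLoss ℓ φ X Y lam (θ + t • δ)) =ᶠ[𝓝 0] G := by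
    filter_upwards [hD] with t ht
    simp only [nnLoss, ht]
    simp [G]
  have hderivG : HasDerivAt G
      ((∑ i, ℓ' (-(Y i) * nnOut φ θ.1 θ.2 (X i)) * (-(Y i) * D i))
        + (1 / 2) * ∑ j, lam j * (2 * (θ.1 j * δ.1 j) + 2 * ⟪θ.2 j, δ.2 j⟫)) 0 := by
    refine .add (HasDerivAt.fun_sum fun i _ => ?_) (.const_mul _ (.fun_sum fun j _ => ?_))
    · exact ((hderiv _).comp (0 : ℝ) ((((hasDerivAt_id (0 : ℝ)).mul_const (D i)).const_add
        (nnOut φ θ.1 θ.2 (X i))).const_mul (-(Y i)))).congr_deriv (by simp)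
    · have ha := (((hasDerivAt_id (0 : ℝ)).mul_const (δ.1 j)).const_add (θ.1 j)).fun_pow 2
      have hw := (((hasDerivAt_id (0 : ℝ)).smul_const (δ.2 j)).const_add (θ.2 j)).norm_sq
      exact ((ha.add hw).const_mul (lam j)).congr_deriv (by simp [mul_assoc])
  have hzero := (hline.congr hG).hasDerivAt_eq_zero hderivG
  rw [← sub_eq_zero, ← hzero, Finset.mul_sum, sub_eq_add_neg, ← Finset.sum_neg_distrib, add_comm]
  congr 1 <;> exact Finset.sum_congr rfl fun _ _ => by ring

theorem IsLocalMin.nnLoss_stationary_neuron (hderiv : ∀ z, HasDerivAt ℓ (ℓ' z) z)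
    {a : Fin m → ℝ} {w : Fin m → Vec d} (hmin : IsLocalMin (nnLoss ℓ φ X Y lam) (a, w))
    (j : Fin m) (c : ℝ) (u : Vec d) (D : Fin n → ℝ)
    (hD : ∀ᶠ t : ℝ in 𝓝 0, ∀ i, (a j + t * c) * nnRelu (nnDot (w j + t • u) (nnHad (X i) (φ j)))
      = a j * nnRelu (nnDot (w j) (nnHad (X i) (φ j))) + t * D i) :
    lam j * (a j * c + ⟪w j, u⟫) = ∑ i, Y i * ℓ' (-(Y i) * nnOut φ a w (X i)) * D i := by
  have hline := hmin.nnLoss_stationary_line hderiv (Pi.single j c, Pi.single j u) D <| by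
    filter_upwards [hD] with t ht i
    simp only [Prod.fst_add, Prod.snd_add, Prod.smul_fst, Prod.smul_snd, ← Pi.single_smul',
      nnOut_add_single, smul_eq_mul, ht i]
    ring
  rw [Finset.sum_eq_single j (fun k _ hk => by simp [hk]) (by simp)] at hline
  simpa only [Pi.single_eq_same] using hline

theorem IsLocalMin.nnLoss_stationary_outer (hderiv : ∀ z, HasDerivAt ℓ (ℓ' z) z)
    {a : Fin m → ℝ} {w : Fin m → Vec d} (hmin : IsLocalMin (nnLoss ℓ φ X Y lam) (a, w))
    (j : Fin m) :
    lam j * a j = ∑ i, Y i * ℓ' (-(Y i) * nnOut φ a w (X i))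
      * nnRelu (nnDot (w j) (nnHad (X i) (φ j))) := by
  simpa using hmin.nnLoss_stationary_neuron hderiv j 1 0 _ (.of_forall fun t i => by simp [add_mul])

theorem IsLocalMin.nnLoss_stationary_inner (hderiv : ∀ z, HasDerivAt ℓ (ℓ' z) z)
    {a : Fin m → ℝ} {w : Fin m → Vec d} (hmin : IsLocalMin (nnLoss ℓ φ X Y lam) (a, w))
    (j : Fin m) (h : Vec d)
    (hkink : ∀ i, nnDot (w j) (nnHad (X i) (φ j)) = 0 → nnDot h (nnHad (X i) (φ j)) = 0) :
    lam j * ⟪w j, h⟫ = a j * ∑ i, Y i * ℓ' (-(Y i) * nnOut φ a w (X i))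
      * (if 0 < nnDot (w j) (nnHad (X i) (φ j)) then nnDot h (nnHad (X i) (φ j)) else 0) := by
  have hD := Filter.eventually_all.2 fun i => eventually_nnRelu_add_mul (hkink i)
  have := hmin.nnLoss_stationary_neuron hderiv j 0 h (fun i => a j *
      if 0 < nnDot (w j) (nnHad (X i) (φ j)) then nnDot h (nnHad (X i) (φ j)) else 0) <| by
    filter_upwards [hD] with t ht i
    rw [nnDot_eq_inner, inner_add_left, inner_smul_left, ← nnDot_eq_inner, ← nnDot_eq_inner]
    simp only [RCLike.conj_to_real, add_zero, mul_zero, ht i]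
    ring
  simpa [Finset.mul_sum, mul_left_comm] using this

end Network

theorem IsLocalMin.nnLoss_inactive_or_eq_norm {d m n : ℕ} {φ : ℕ → Vec d} {X : Fin n → Vec d}
    {Y : Fin n → ℝ} {ℓ ℓ' : ℝ → ℝ} {lam : Fin m → ℝ} (hderiv : ∀ z, HasDerivAt ℓ (ℓ' z) z)
    {a : Fin m → ℝ} {w : Fin m → Vec d} (hmin : IsLocalMin (nnLoss ℓ φ X Y lam) (a, w))
    (j : Fin m) (hlam : 0 < lam j) :
    (a j = 0 ∧ w j = 0) ∨ lam j = ‖projectedActiveSum (fun i => nnHad (X i) (φ j))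
      {i | 0 < nnDot (w j) (nnHad (X i) (φ j))} {i | nnDot (w j) (nnHad (X i) (φ j)) = 0}
      (fun i => Y i * ℓ' (-(Y i) * nnOut φ a w (X i)))‖ := by
  set x := fun i => nnHad (X i) (φ j)
  set B : Finset (Fin n) := {i | nnDot (w j) (x i) = 0}
  have hB : ∀ u ∈ (Submodule.span ℝ (x '' B))ᗮ, ∀ i, nnDot (w j) (x i) = 0 → ⟪x i, u⟫ = 0 :=
    fun u hu i hi => hu _ (Submodule.subset_span ⟨i, by simpa [B] using hi, rfl⟩)
  rw [projectedActiveSum_apply]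
  refine eq_zero_or_eq_norm_starProjection ?_ hlam (fun u hu => ?_) ?_
  · intro u hu
    have hker := (Submodule.span_le (p := LinearMap.ker (innerₛₗ ℝ (w j)))).2
      (by rintro _ ⟨i, hi, rfl⟩; simpa [B, nnDot_eq_inner] using hi) hu
    simpa [real_inner_comm] using hker
  · rw [hmin.nnLoss_stationary_inner hderiv j u fun i hi => by
      rw [nnDot_eq_inner, real_inner_comm, hB u hu i hi], sum_inner, Finset.sum_filter]
    congr 1
    refine Finset.sum_congr rfl fun i _ => ?_
    split_ifs <;> simp [x, inner_smul_left, nnDot_eq_inner, real_inner_comm]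
  · rw [hmin.nnLoss_stationary_outer hderiv j, sum_inner, Finset.sum_filter]
    refine Finset.sum_congr rfl fun i _ => ?_
    rw [nnRelu_eq_ite]
    split_ifs <;> simp [x, inner_smul_left, nnDot_eq_inner, real_inner_comm]

theorem local_min_has_inactive_neuron_general
    {d m n : ℕ} (φ : ℕ → Vec d)
    (X : Fin n → Vec d) (Y : Fin n → ℝ)
    (hm : n + 1 ≤ m)
    (ℓ ℓ' : ℝ → ℝ) (hderiv : ∀ z, HasDerivAt ℓ (ℓ' z) z) :
    ∃ C : Set (Fin m → ℝ), MeasureTheory.volume C = 0 ∧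
      ∀ lam : Fin m → ℝ, (∀ j, 0 < lam j) → lam ∉ C →
        ∀ θstar : (Fin m → ℝ) × (Fin m → Vec d),
          IsLocalMin (nnLoss ℓ φ X Y lam) θstar →
            ∃ j : Fin m, θstar.1 j = 0 ∧ θstar.2 j = 0 := by
  refine ⟨⋃ PB : (Fin m → Finset (Fin n)) × (Fin m → Finset (Fin n)),
    range fun g j => ‖projectedActiveSum (fun i => nnHad (X i) (φ j)) (PB.1 j) (PB.2 j) g‖,
    measure_iUnion_null fun _ => volume_range_norm_continuousLinearMap_eq_zero _ (by simpa), ?_⟩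
  rintro lam hlam hC ⟨a, w⟩ hmin
  by_contra! hactive
  have hrepr := fun j => (hmin.nnLoss_inactive_or_eq_norm hderiv j (hlam j)).resolve_left
    fun h => hactive j h.1 h.2
  exact hC (mem_iUnion.2 ⟨(fun j => {i | 0 < nnDot (w j) (nnHad (X i) (φ j))},
    fun j => {i | nnDot (w j) (nnHad (X i) (φ j)) = 0}), _, funext fun j => (hrepr j).symm⟩)

theorem local_min_has_inactive_neuron
    {d m n : ℕ} (φ : ℕ → Vec d)
    (X : Fin n → Vec d) (Y : Fin n → ℝ)
    (hY : ∀ i, Y i = 1 ∨ Y i = -1)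
    (hX : ∀ i, ‖X i‖ ≤ 1)
    (hm : n + 1 ≤ m)
    (ℓ ℓ' : ℝ → ℝ) (hderiv : ∀ z, HasDerivAt ℓ (ℓ' z) z) :
    ∃ C : Set (Fin m → ℝ), MeasureTheory.volume C = 0 ∧
      ∀ lam : Fin m → ℝ, (∀ j, 0 < lam j) → lam ∉ C →
        ∀ θstar : (Fin m → ℝ) × (Fin m → Vec d),
          IsLocalMin (nnLoss ℓ φ X Y lam) θstar →
            ∃ j : Fin m, θstar.1 j = 0 ∧ θstar.2 j = 0 :=
  local_min_has_inactive_neuron_general φ X Y hm ℓ ℓ' hderiv
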